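/- arXiv:1609.02444 — 3 statements merged into one kernel-verified Lean document; each statement's English description precedes it below -/
import Mathlib

section
/- Let (X,d) be a complete metric space and let I : X → (−∞,0] be a function of Baire class 1 (i.e. a pointwise limit of a sequence of continuous real-valued functions on X). Let X₀ be a nonempty dense subset of X with the following property: for any β < 0 there exists α = α(β) > 0 such that for any x ∈ X₀ with I(x) < β there exists a sequence (xₙ) ⊂ X₀ with xₙ → x in (X,d) and liminf_{n→∞} I(xₙ) ≥ I(x) + α(β). Then there exists a residual set S ⊆ X (i.e. a set whose complement is meagre) such that I(x) = 0 for all x ∈ S. -/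
/-!
A pointwise limit `g` of continuous functions `f n` is continuous on a residual set: for each
`ε > 0` the closed sets on which the tail `(f p)_{p ≥ n}` oscillates by at most `ε` cover the
space, so the union of their interiors has meagre complement, and on the interior of such a set
`g` is uniformly `ε`-close to the continuous `f n`.

At a continuity point `x` of `I` with `I x < β < 0`, points of `X₀` near `x` have values near
`I x`, and there a jump by `α(β)` along a sequence would produce values of `I` far above `I x`
arbitrarily close to `x`. Hence `I ≥ β` for every `β < 0` at each continuity point.
-/

open Filter Topology Set

theorem iUnion_interior_mem_residual {X : Type*} [TopologicalSpace X] {ι : Type*} [Countable ι]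
    {F : ι → Set X} (hF : ∀ i, IsClosed (F i)) (hcover : ⋃ i, F i = univ) :
    ⋃ i, interior (F i) ∈ residual X := by
  have hfrontier : (⋃ i, interior (F i))ᶜ ⊆ ⋃ i, frontier (F i) := by
    intro x hx
    obtain ⟨i, hxi⟩ := mem_iUnion.mp (hcover ▸ mem_univ x)
    refine mem_iUnion.mpr ⟨i, (hF i).frontier_eq ▸ ⟨hxi, fun hint => hx ?_⟩⟩
    exact mem_iUnion.mpr ⟨i, hint⟩
  have hmeagre : IsMeagre (⋃ i, frontier (F i)) := isMeagre_iUnion fun i =>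
    (isClosed_frontier.isNowhereDense_iff.mpr (interior_frontier (hF i))).isMeagre
  simpa only [IsMeagre, compl_compl] using hmeagre.mono hfrontier

section PointwiseLimit

variable {X Y : Type*} [PseudoMetricSpace Y] {f : ℕ → X → Y} {g : X → Y}

def cauchyLocus (f : ℕ → X → Y) (ε : ℝ) (n : ℕ) : Set X :=
  {x | ∀ p ≥ n, ∀ q ≥ n, dist (f p x) (f q x) ≤ ε}

theorem isClosed_cauchyLocus [TopologicalSpace X] (hf : ∀ n, Continuous (f n))
    (ε : ℝ) (n : ℕ) : IsClosed (cauchyLocus f ε n) := by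
  simp only [cauchyLocus, ofPred_forall]
  exact isClosed_biInter fun p _ => isClosed_biInter fun q _ =>
    isClosed_le ((hf p).dist (hf q)) continuous_const

theorem iUnion_cauchyLocus_eq_univ (hlim : ∀ x, Tendsto (fun n => f n x) atTop (𝓝 (g x)))
    {ε : ℝ} (hε : 0 < ε) : ⋃ n, cauchyLocus f ε n = univ := by
  refine eq_univ_of_forall fun x => mem_iUnion.mpr ?_
  obtain ⟨N, hN⟩ := Metric.cauchySeq_iff.mp (hlim x).cauchySeq ε hε
  exact ⟨N, fun p hp q hq => (hN p hp q hq).le⟩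

theorem dist_le_of_mem_cauchyLocus (hlim : ∀ x, Tendsto (fun n => f n x) atTop (𝓝 (g x)))
    {ε : ℝ} {n : ℕ} {x : X} (hx : x ∈ cauchyLocus f ε n) : dist (g x) (f n x) ≤ ε := by
  rw [dist_comm]
  exact le_of_tendsto (tendsto_const_nhds.dist (hlim x))
    (eventually_atTop.2 ⟨n, fun q hq => hx n le_rfl q hq⟩)

theorem residual_continuousAt_of_tendsto [TopologicalSpace X]
    (hlim : ∀ x, Tendsto (fun n => f n x) atTop (𝓝 (g x))) (hf : ∀ n, Continuous (f n)) :
    {x | ContinuousAt g x} ∈ residual X := by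
  have hres : ⋂ k : ℕ, ⋃ n, interior (cauchyLocus f (1 / (k + 1)) n) ∈ residual X :=
    countable_iInter_mem.mpr fun k => iUnion_interior_mem_residual (isClosed_cauchyLocus hf _)
      (iUnion_cauchyLocus_eq_univ hlim (by positivity))
  refine mem_of_superset hres fun x hx => ?_
  refine continuousAt_of_locally_uniform_approx_of_continuousAt fun u hu => ?_
  obtain ⟨ε, hε, hεu⟩ := Metric.mem_uniformity_dist.mp hu
  obtain ⟨k, hk⟩ := exists_nat_one_div_lt hε
  obtain ⟨n, hn⟩ := mem_iUnion.mp (mem_iInter.mp hx k)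
  refine ⟨_, isOpen_interior.mem_nhds hn, f n, (hf n).continuousAt, fun y hy => hεu ?_⟩
  exact (dist_le_of_mem_cauchyLocus hlim (interior_subset hy)).trans_lt hk

end PointwiseLimit

theorem le_of_continuousAt_of_liminf_jump {X : Type*} [TopologicalSpace X] {I : X → ℝ}
    {X0 : Set X} {x : X} (hx : ContinuousAt I x) (hxX0 : x ∈ closure X0) {α β : ℝ}
    (hα : 0 < α)
    (hjump : ∀ y ∈ X0, I y < β → ∃ ys : ℕ → X, Tendsto ys atTop (𝓝 y) ∧
      I y + α ≤ liminf (fun n => I (ys n)) atTop) :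
    β ≤ I x := by
  by_contra! hlt
  set ε := min (α / 2) ((β - I x) / 2)
  have hε : 0 < ε := lt_min (by linarith) (by linarith)
  obtain ⟨U, hUI, hU, hxU⟩ := mem_nhds_iff.mp
    (hx.preimage_mem_nhds (Ioo_mem_nhds (sub_lt_self (I x) hε) (lt_add_of_pos_right (I x) hε)))
  obtain ⟨y, hyU, hyX0⟩ := mem_closure_iff.mp hxX0 U hU hxU
  have hIy := hUI hyU
  obtain ⟨ys, hys, hliminf⟩ :=
    hjump y hyX0 (by linarith [hIy.2, min_le_right (α / 2) ((β - I x) / 2)])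
  have hnear : ∀ᶠ n in atTop, I (ys n) ∈ Ioo (I x - ε) (I x + ε) :=
    (hys.eventually_mem (hU.mem_nhds hyU)).mono fun n hn => hUI hn
  have hle : liminf (fun n => I (ys n)) atTop ≤ I x + ε :=
    liminf_le_of_frequently_le (hnear.mono fun n hn => hn.2.le).frequently
      (isBoundedUnder_of_eventually_ge (hnear.mono fun n hn => hn.1.le))
  linarith [hIy.1, min_le_left (α / 2) ((β - I x) / 2)]

theorem baire_category_lemma_general {X : Type*} [MetricSpace X]
    (I : X → ℝ) (hI_nonpos : ∀ x, I x ≤ 0)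
    (hI_baire1 : ∃ f : ℕ → X → ℝ, (∀ n, Continuous (f n)) ∧
      ∀ x, Tendsto (fun n => f n x) atTop (𝓝 (I x)))
    (X0 : Set X) (hX0_dense : Dense X0)
    (hprop : ∀ β : ℝ, β < 0 → ∃ α : ℝ, 0 < α ∧
      ∀ x ∈ X0, I x < β →
        ∃ xs : ℕ → X, (∀ n, xs n ∈ X0) ∧ Tendsto xs atTop (𝓝 x) ∧
          I x + α ≤ liminf (fun n => I (xs n)) atTop) :
    ∃ S : Set X, S ∈ residual X ∧ ∀ x ∈ S, I x = 0 := by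
  obtain ⟨f, hf, hlim⟩ := hI_baire1
  refine ⟨{x | ContinuousAt I x}, residual_continuousAt_of_tendsto hlim hf, fun x hx => ?_⟩
  refine le_antisymm (hI_nonpos x) (le_of_forall_lt_imp_le_of_dense fun β hβ => ?_)
  obtain ⟨α, hα, hstep⟩ := hprop β hβ
  refine le_of_continuousAt_of_liminf_jump hx (hX0_dense.closure_eq ▸ mem_univ x) hα ?_
  intro y hy hIy
  obtain ⟨ys, -, hys, hliminf⟩ := hstep y hy hIy
  exact ⟨ys, hys, hliminf⟩

/-- **Lemma 4.3** (Baire category argument). If `I : X → (-∞,0]` is of Baire class 1 on a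
complete metric space `X` and on a dense subset `X₀` the value of `I` can always be strictly
increased by a quantified amount along sequences staying in `X₀`, then `I` vanishes on a
residual subset of `X`. -/
theorem baire_category_lemma {X : Type*} [MetricSpace X] [CompleteSpace X]
    (I : X → ℝ) (hI_nonpos : ∀ x, I x ≤ 0)
    (hI_baire1 : ∃ f : ℕ → X → ℝ, (∀ n, Continuous (f n)) ∧
      ∀ x, Tendsto (fun n => f n x) atTop (𝓝 (I x)))
    (X0 : Set X) (hX0_ne : X0.Nonempty) (hX0_dense : Dense X0)
    (hprop : ∀ β : ℝ, β < 0 → ∃ α : ℝ, 0 < α ∧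
      ∀ x ∈ X0, I x < β →
        ∃ xs : ℕ → X, (∀ n, xs n ∈ X0) ∧ Tendsto xs atTop (𝓝 x) ∧
          I x + α ≤ liminf (fun n => I (xs n)) atTop) :
    ∃ S : Set X, S ∈ residual X ∧ ∀ x ∈ S, I x = 0 :=
  baire_category_lemma_general I hI_nonpos hI_baire1 X0 hX0_dense hprop
end

section
/- For every v ∈ ℝ³ and every symmetric traceless matrix V ∈ ℝ^{3×3}_{0,sym}, one has ½|v|² ≤ (3/2)·λ_max(v⊗v − V), where λ_max denotes the largest eigenvalue of a symmetric matrix; moreover, equality holds if and only if V = v⊗v − (1/3)|v|²·Id. -/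
/-!
`A := v ⊗ v - V` is symmetric with `tr A = |v|²`. Its largest eigenvalue is at least the mean
`tr A / 3` of its three eigenvalues, with equality exactly when all eigenvalues coincide, i.e.
(spectral theorem) when `A` is the scalar matrix `(|v|² / 3) • 1`.
-/

noncomputable section

/-- maximal eigenvalue of a (symmetric) real 3×3 matrix -/
def lamMax (A : Matrix (Fin 3) (Fin 3) ℝ) : ℝ :=
  sSup {r : ℝ | ∃ x : Fin 3 → ℝ, x ≠ 0 ∧ A.mulVec x = r • x}

open Matrix

theorem Matrix.mem_spectrum_iff_exists_mulVec_eq_smul {K n : Type*} [Field K] [Fintype n]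
    [DecidableEq n] (A : Matrix n n K) (r : K) :
    r ∈ spectrum K A ↔ ∃ x : n → K, x ≠ 0 ∧ A *ᵥ x = r • x := by
  rw [← spectrum_toLin', ← Module.End.hasEigenvalue_iff_mem_spectrum]
  constructor
  · intro hr
    obtain ⟨x, hx⟩ := hr.exists_hasEigenvector
    exact ⟨x, hx.2, Module.End.mem_eigenspace_iff.1 hx.1⟩
  · rintro ⟨x, hx, hAx⟩
    exact Module.End.hasEigenvalue_of_hasEigenvector ⟨Module.End.mem_eigenspace_iff.2 hAx, hx⟩

theorem lamMax_eq_sSup_spectrum (A : Matrix (Fin 3) (Fin 3) ℝ) :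
    lamMax A = sSup (spectrum ℝ A) :=
  congrArg sSup <| Set.ext fun r => (mem_spectrum_iff_exists_mulVec_eq_smul A r).symm

namespace Matrix.IsHermitian

section

variable {n : Type*} [Fintype n] [DecidableEq n] {A : Matrix n n ℝ}

theorem trace_eq_sum_eigenvalues_real (hA : A.IsHermitian) :
    A.trace = ∑ i, hA.eigenvalues i := by
  simpa using hA.trace_eq_sum_eigenvalues

theorem eigenvalues_eq_iff_eq_smul_one (hA : A.IsHermitian) (c : ℝ) :
    (∀ i, hA.eigenvalues i = c) ↔ A = c • 1 := by
  constructor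
  · intro h
    have hdiag : diagonal (RCLike.ofReal ∘ hA.eigenvalues) = algebraMap ℝ (Matrix n n ℝ) c := by
      rw [algebraMap_eq_diagonal]
      congr 1
      ext i
      simp [h]
    rw [hA.spectral_theorem, hdiag, AlgHomClass.commutes, Algebra.algebraMap_eq_smul_one]
  · intro h i
    obtain ⟨x, hx, hAx⟩ :=
      (mem_spectrum_iff_exists_mulVec_eq_smul A _).1 (hA.eigenvalues_mem_spectrum_real i)
    subst h
    rw [smul_mulVec, one_mulVec] at hAx
    exact (smul_left_injective ℝ hx hAx).symm

end

section

variable {A : Matrix (Fin 3) (Fin 3) ℝ}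

theorem isGreatest_lamMax (hA : A.IsHermitian) :
    IsGreatest (Set.range hA.eigenvalues) (lamMax A) := by
  have hfin : (Set.range hA.eigenvalues).Finite := Set.finite_range _
  rw [lamMax_eq_sSup_spectrum, hA.spectrum_real_eq_range_eigenvalues]
  exact ⟨(Set.range_nonempty _).csSup_mem hfin, fun _ hr => le_csSup hfin.bddAbove hr⟩

theorem trace_le_three_mul_lamMax (hA : A.IsHermitian) : A.trace ≤ 3 * lamMax A :=
  calc A.trace = ∑ i, hA.eigenvalues i := hA.trace_eq_sum_eigenvalues_real
    _ ≤ ∑ _i : Fin 3, lamMax A := Finset.sum_le_sum fun i _ => hA.isGreatest_lamMax.2 ⟨i, rfl⟩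
    _ = 3 * lamMax A := by simp

theorem trace_eq_three_mul_lamMax_iff (hA : A.IsHermitian) :
    A.trace = 3 * lamMax A ↔ A = (A.trace / 3) • 1 := by
  have h_eq_iff : A.trace = 3 * lamMax A ↔ A = lamMax A • 1 := by
    have := Finset.sum_eq_sum_iff_of_le fun i (_ : i ∈ Finset.univ) =>
      hA.isGreatest_lamMax.2 ⟨i, rfl⟩
    simpa [← hA.trace_eq_sum_eigenvalues_real, hA.eigenvalues_eq_iff_eq_smul_one] using this
  constructor
  · intro h
    rw [h, mul_div_cancel_left₀ _ three_ne_zero]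
    exact h_eq_iff.1 h
  · intro h
    obtain ⟨i, hi⟩ := hA.isGreatest_lamMax.1
    rw [← hi, (hA.eigenvalues_eq_iff_eq_smul_one _).2 h i]
    ring

end

end Matrix.IsHermitian

/-- **Inequality (3.5)–(3.6)**: for every `v ∈ ℝ³` and every symmetric traceless `V`,
`½|v|² ≤ (3/2) λ_max(v⊗v − V)`, with equality iff `V = v⊗v − (1/3)|v|² Id`. -/
theorem half_normsq_le_lamMax (v : Fin 3 → ℝ) (V : Matrix (Fin 3) (Fin 3) ℝ)
    (hsymm : V.IsSymm) (htrace : V.trace = 0) :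
    (1/2) * (∑ i, v i ^ 2) ≤ (3/2) * lamMax (Matrix.vecMulVec v v - V) ∧
    ((1/2) * (∑ i, v i ^ 2) = (3/2) * lamMax (Matrix.vecMulVec v v - V) ↔
      V = Matrix.vecMulVec v v - ((1/3) * ∑ i, v i ^ 2) • (1 : Matrix (Fin 3) (Fin 3) ℝ)) := by
  have hA : (vecMulVec v v - V).IsHermitian := by
    have hv : (vecMulVec v v).IsHermitian := by
      simpa using (posSemidef_vecMulVec_self_star v).isHermitian
    exact hv.sub ((conjTranspose_eq_transpose_of_trivial V).trans hsymm)
  have htr : (vecMulVec v v - V).trace = ∑ i, v i ^ 2 := by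
    simp [trace_sub, htrace, trace_vecMulVec, dotProduct, sq]
  refine ⟨by linarith [hA.trace_le_three_mul_lamMax], ?_⟩
  calc (1/2) * (∑ i, v i ^ 2) = (3/2) * lamMax (vecMulVec v v - V)
      ↔ (vecMulVec v v - V).trace = 3 * lamMax (vecMulVec v v - V) := by
        rw [htr]; constructor <;> intro h <;> linarith
    _ ↔ vecMulVec v v - V = ((1/3) * ∑ i, v i ^ 2) • 1 := by
        rw [hA.trace_eq_three_mul_lamMax_iff, htr, div_eq_inv_mul, one_div]
    _ ↔ _ := by rw [sub_eq_iff_eq_add, eq_sub_iff_add_eq, add_comm, eq_comm]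

end
end

section
/- For every v ∈ ℝ³ and every symmetric traceless matrix V ∈ ℝ^{3×3}_{0,sym}, one has |V|_{ℓ∞} ≤ 2|λ_min(V)| ≤ (4/3)·e(v,V), where |V|_{ℓ∞} = max_{i,j}|V_{ij}|, λ_min denotes the smallest eigenvalue of a symmetric matrix, and e(v,V) = (3/2)·λ_max(v⊗v − V). -/
noncomputable section

/-- minimal eigenvalue of a (symmetric) real 3×3 matrix -/
def lamMin (A : Matrix (Fin 3) (Fin 3) ℝ) : ℝ :=
  sInf {r : ℝ | ∃ x : Fin 3 → ℝ, x ≠ 0 ∧ A.mulVec x = r • x}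

/-! The quadratic form `x ⬝ᵥ A *ᵥ x` of a symmetric matrix lies between `λ_min A * ‖x‖²` and
`λ_max A * ‖x‖²`. Evaluating it at `eᵢ` and `eᵢ ± eⱼ` bounds every entry of `A` by
`max |λ_min A| |λ_max A|`, and for traceless `V` of size 3 the eigenvalues sum to zero, so
`λ_max V ≤ -2 λ_min V`. For the second inequality, evaluate the form of `v ⊗ v - V` at an
eigenvector of `V` for `λ_min V`: as `v ⊗ v` is positive semidefinite, the value is at least
`-λ_min V ‖x‖²`. -/

open Matrix
open scoped MatrixOrder

namespace Matrix

variable {n : Type*} [Fintype n] [DecidableEq n]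

theorem setOf_exists_mulVec_eq_smul_eq_spectrum {K : Type*} [Field K] (A : Matrix n n K) :
    {r : K | ∃ x : n → K, x ≠ 0 ∧ A *ᵥ x = r • x} = spectrum K A := by
  ext r
  rw [← spectrum_toLin', ← Module.End.hasEigenvalue_iff_mem_spectrum]
  constructor
  · rintro ⟨x, hx, hAx⟩
    exact Module.End.hasEigenvalue_of_hasEigenvector
      ⟨Module.End.mem_eigenspace_iff.mpr (by simpa using hAx), hx⟩
  · intro h
    obtain ⟨x, hx_mem, hx⟩ := h.exists_hasEigenvector
    exact ⟨x, hx, by simpa using Module.End.mem_eigenspace_iff.mp hx_mem⟩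

namespace IsHermitian

variable {A : Matrix n n ℝ}

theorem dotProduct_mulVec_le (hA : A.IsHermitian) {b : ℝ} (hb : ∀ r ∈ spectrum ℝ A, r ≤ b)
    (x : n → ℝ) : x ⬝ᵥ (A *ᵥ x) ≤ b * (x ⬝ᵥ x) := by
  have h : A ≤ algebraMap ℝ (Matrix n n ℝ) b := le_algebraMap_of_spectrum_le hb hA
  simpa [sub_mulVec, Algebra.algebraMap_eq_smul_one, smul_mulVec] using
    (Matrix.le_iff.mp h).dotProduct_mulVec_nonneg x

theorem le_dotProduct_mulVec (hA : A.IsHermitian) {a : ℝ} (ha : ∀ r ∈ spectrum ℝ A, a ≤ r)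
    (x : n → ℝ) : a * (x ⬝ᵥ x) ≤ x ⬝ᵥ (A *ᵥ x) := by
  have h : algebraMap ℝ (Matrix n n ℝ) a ≤ A := algebraMap_le_of_le_spectrum ha hA
  simpa [sub_mulVec, Algebra.algebraMap_eq_smul_one, smul_mulVec] using
    (Matrix.le_iff.mp h).dotProduct_mulVec_nonneg x

theorem abs_apply_le (hA : A.IsHermitian) {a b : ℝ} (hspec : spectrum ℝ A ⊆ Set.Icc a b)
    (i j : n) : |A i j| ≤ max |a| |b| := by
  have lower := hA.le_dotProduct_mulVec fun r hr => (hspec hr).1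
  have upper := hA.dotProduct_mulVec_le fun r hr => (hspec hr).2
  have hmax : |a| ≤ max |a| |b| ∧ |b| ≤ max |a| |b| := ⟨le_max_left _ _, le_max_right _ _⟩
  rw [abs_le]
  rcases eq_or_ne i j with rfl | hij
  · have h₁ := lower (Pi.single i 1)
    have h₂ := upper (Pi.single i 1)
    simp only [dotProduct_single, Pi.single_eq_same, mul_one, mulVec_single, MulOpposite.op_one,
      one_smul, single_dotProduct, col_apply, one_mul] at h₁ h₂
    constructor <;> linarith [neg_abs_le a, le_abs_self b]
  · have hji : A j i = A i j := by simpa using hA.apply i j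
    have h₁ := lower (Pi.single i 1 - Pi.single j 1)
    have h₂ := upper (Pi.single i 1 + Pi.single j 1)
    have h₃ := lower (Pi.single i 1 + Pi.single j 1)
    have h₄ := upper (Pi.single i 1 - Pi.single j 1)
    simp only [mulVec_add, mulVec_sub, dotProduct_add, dotProduct_sub, add_dotProduct,
      sub_dotProduct, mulVec_single, MulOpposite.op_one, one_smul, dotProduct_single,
      single_dotProduct, col_apply, Pi.add_apply, Pi.sub_apply, Pi.single_eq_same,
      Pi.single_eq_of_ne hij, Pi.single_eq_of_ne hij.symm, hji, mul_one, one_mul, add_zero,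
      zero_add, sub_zero, zero_sub, sub_neg_eq_add] at h₁ h₂ h₃ h₄
    constructor <;> linarith [neg_abs_le a, le_abs_self b]

theorem le_neg_mul_of_trace_eq_zero (hA : A.IsHermitian) (htr : A.trace = 0) {a : ℝ}
    (ha : ∀ r ∈ spectrum ℝ A, a ≤ r) {r : ℝ} (hr : r ∈ spectrum ℝ A) :
    r ≤ -((Fintype.card n - 1 : ℝ) * a) := by
  rw [hA.spectrum_real_eq_range_eigenvalues] at hr ha
  obtain ⟨j, rfl⟩ := hr
  have hsum : ∑ i, hA.eigenvalues i = 0 := by simpa [htr] using hA.trace_eq_sum_eigenvalues.symm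
  have hj : hA.eigenvalues j - a ≤ ∑ i, (hA.eigenvalues i - a) :=
    Finset.single_le_sum (fun i _ => sub_nonneg.mpr (ha _ ⟨i, rfl⟩)) (Finset.mem_univ j)
  rw [Finset.sum_sub_distrib, hsum, Finset.sum_const, Finset.card_univ, nsmul_eq_mul] at hj
  linarith

end IsHermitian

end Matrix

section Extremal

variable {A : Matrix (Fin 3) (Fin 3) ℝ}

theorem isLeast_lamMin (hA : A.IsHermitian) : IsLeast (spectrum ℝ A) (lamMin A) := by
  rw [lamMin, setOf_exists_mulVec_eq_smul_eq_spectrum]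
  exact ⟨Set.Nonempty.csInf_mem ⟨_, hA.eigenvalues_mem_spectrum_real 0⟩ A.finite_real_spectrum,
    fun _ hr => csInf_le A.finite_real_spectrum.bddBelow hr⟩

theorem isGreatest_lamMax (hA : A.IsHermitian) : IsGreatest (spectrum ℝ A) (lamMax A) := by
  rw [lamMax, setOf_exists_mulVec_eq_smul_eq_spectrum]
  exact ⟨Set.Nonempty.csSup_mem ⟨_, hA.eigenvalues_mem_spectrum_real 0⟩ A.finite_real_spectrum,
    fun _ hr => le_csSup A.finite_real_spectrum.bddAbove hr⟩

theorem neg_lamMin_le_lamMax_vecMulVec_sub (v : Fin 3 → ℝ) (hA : A.IsHermitian) :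
    -lamMin A ≤ lamMax (vecMulVec v v - A) := by
  have hmem := (isLeast_lamMin hA).1
  rw [← setOf_exists_mulVec_eq_smul_eq_spectrum] at hmem
  obtain ⟨x, hx, hAx⟩ := hmem
  have hB : (vecMulVec v v - A).IsHermitian := by
    simpa using (posSemidef_vecMulVec_self_star v).isHermitian.sub hA
  have hvv : 0 ≤ x ⬝ᵥ (vecMulVec v v *ᵥ x) := by
    simpa using (posSemidef_vecMulVec_self_star v).dotProduct_mulVec_nonneg x
  have hxx : 0 < x ⬝ᵥ x :=
    (dotProduct_self_star_nonneg x).lt_of_ne' (mt dotProduct_self_eq_zero.mp hx)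
  have key : -lamMin A * (x ⬝ᵥ x) ≤ lamMax (vecMulVec v v - A) * (x ⬝ᵥ x) := by
    calc -lamMin A * (x ⬝ᵥ x) ≤ x ⬝ᵥ ((vecMulVec v v - A) *ᵥ x) := by
          rw [sub_mulVec, dotProduct_sub, hAx, dotProduct_smul, smul_eq_mul]; linarith
      _ ≤ _ := hB.dotProduct_mulVec_le (isGreatest_lamMax hB).2 x
  exact le_of_mul_le_mul_right key hxx

end Extremal

/-- **Inequality (3.7)**: for `v ∈ ℝ³` and symmetric traceless `V`,
`|V|_{ℓ∞} ≤ 2|λ_min(V)| ≤ (4/3) e(v,V)` where `e(v,V) = (3/2) λ_max(v⊗v − V)`. -/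
theorem linfty_le_lamMin_le_e (v : Fin 3 → ℝ) (V : Matrix (Fin 3) (Fin 3) ℝ)
    (hsymm : V.IsSymm) (htrace : V.trace = 0) :
    (∀ i j, |V i j| ≤ 2 * |lamMin V|) ∧
    2 * |lamMin V| ≤ (4/3) * ((3/2) * lamMax (Matrix.vecMulVec v v - V)) := by
  have hV : V.IsHermitian := isHermitian_iff_isSymm.mpr hsymm
  have hmin := isLeast_lamMin hV
  have hspec : spectrum ℝ V ⊆ Set.Icc (lamMin V) (-2 * lamMin V) := fun r hr =>
    ⟨hmin.2 hr, by
      have h := hV.le_neg_mul_of_trace_eq_zero htrace hmin.2 hr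
      norm_num at h
      linarith⟩
  have hm : lamMin V ≤ 0 := by linarith [(hspec hmin.1).2]
  have hmax : max |lamMin V| |-2 * lamMin V| = 2 * |lamMin V| := by
    rw [abs_mul, abs_neg, abs_two]
    exact max_eq_right (by linarith [abs_nonneg (lamMin V)])
  refine ⟨fun i j => hmax ▸ hV.abs_apply_le hspec i j, ?_⟩
  linarith [abs_of_nonpos hm, neg_lamMin_le_lamMax_vecMulVec_sub v hV]
end
end
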